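/- Let α ∈ (1,∞). Let ρ₁, ρ₂ be positive semidefinite complex matrices and σ₁, σ₂ positive definite complex matrices, with ρ₁, σ₁ of the same size and ρ₂, σ₂ of the same size. Then Q^#_α(ρ₁ ⊗ ρ₂ ‖ σ₁ ⊗ σ₂) ≤ Q^#_α(ρ₁‖σ₁) · Q^#_α(ρ₂‖σ₂), where ⊗ denotes the Kronecker product; equivalently, D^#_α is subadditive under tensor products. -/

import Mathlib

open Matrix Filter
open scoped Kronecker Classical ComplexOrder

noncomputable def Matrix.rpowH {n : Type*} [Fintype n] [DecidableEq n]
    (A : Matrix n n ℂ) (r : ℝ) : Matrix n n ℂ :=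
  if hA : A.IsHermitian then
    (hA.eigenvectorUnitary : Matrix n n ℂ) *
      Matrix.diagonal (fun i => ((hA.eigenvalues i ^ r : ℝ) : ℂ)) *
      star (hA.eigenvectorUnitary : Matrix n n ℂ)
  else 0

noncomputable def Matrix.gmean {n : Type*} [Fintype n] [DecidableEq n]
    (β : ℝ) (S A : Matrix n n ℂ) : Matrix n n ℂ :=
  S.rpowH (1/2) * ((S.rpowH (-(1/2)) * A * S.rpowH (-(1/2))).rpowH β) * S.rpowH (1/2)

noncomputable def QSharp {n : Type*} [Fintype n] [DecidableEq n]
    (α : ℝ) (ρ σ : Matrix n n ℂ) : ℝ :=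
  sInf { t : ℝ | ∃ A : Matrix n n ℂ, A.PosSemidef ∧
    (Matrix.gmean (1/α) σ A - ρ).PosSemidef ∧ t = A.trace.re }

noncomputable def DSharp {n : Type*} [Fintype n] [DecidableEq n]
    (α : ℝ) (ρ σ : Matrix n n ℂ) : ℝ :=
  1/(α-1) * Real.logb 2 (QSharp α ρ σ)

noncomputable def opNorm {n : Type*} [Fintype n] [DecidableEq n] (A : Matrix n n ℂ) : ℝ :=
  ‖(Matrix.toEuclideanCLM (𝕜 := ℂ) A : EuclideanSpace ℂ n →L[ℂ] EuclideanSpace ℂ n)‖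

noncomputable def Dtilde {n : Type*} [Fintype n] [DecidableEq n]
    (α : ℝ) (ρ σ : Matrix n n ℂ) : ℝ :=
  1/(α-1) * Real.logb 2
    (((σ.rpowH ((1-α)/(2*α)) * ρ * σ.rpowH ((1-α)/(2*α))).rpowH α).trace.re)

noncomputable def Dhat {n : Type*} [Fintype n] [DecidableEq n]
    (α : ℝ) (ρ σ : Matrix n n ℂ) : ℝ :=
  1/(α-1) * Real.logb 2
    ((σ.rpowH (1/2) * ((σ.rpowH (-(1/2)) * ρ * σ.rpowH (-(1/2))).rpowH α) * σ.rpowH (1/2)).trace.re)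

/-! If `A₁`, `A₂` are feasible for `(ρ₁, σ₁)` and `(ρ₂, σ₂)`, then `A₁ ⊗ A₂` is feasible for
`(ρ₁ ⊗ ρ₂, σ₁ ⊗ σ₂)`: real powers of positive semidefinite matrices, hence weighted geometric
means, are multiplicative under `⊗`, and with `Gᵢ = σᵢ #_{1/α} Aᵢ` the defect splits as
`G₁ ⊗ G₂ - ρ₁ ⊗ ρ₂ = (G₁ - ρ₁) ⊗ G₂ + ρ₁ ⊗ (G₂ - ρ₂)`, a sum of positive semidefinite matrices.
As `tr (A₁ ⊗ A₂) = tr A₁ · tr A₂`, taking infima over the (nonempty, nonnegative) sets of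
feasible traces gives the inequality. -/

namespace Matrix

lemma kronecker_conj {R : Type*} [CommRing R] [StarRing R] {n m : Type*} [Fintype n] [Fintype m]
    (U D : Matrix n n R) (V E : Matrix m m R) :
    (U * D * star U) ⊗ₖ (V * E * star V) = (U ⊗ₖ V) * (D ⊗ₖ E) * star (U ⊗ₖ V) := by
  simp only [star_eq_conjTranspose, conjTranspose_kronecker, mul_kronecker_mul]

lemma diagonal_map_mul_eq_mul_diagonal_map {R : Type*} [CommRing R] [NoZeroDivisors R]
    {m n : Type*} [Fintype m] [DecidableEq m] [Fintype n] [DecidableEq n]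
    {W : Matrix m n R} {d : m → R} {e : n → R}
    (h : diagonal d * W = W * diagonal e) (g : R → R) :
    diagonal (g ∘ d) * W = W * diagonal (g ∘ e) := by
  ext i j
  have hij : (d i - e j) * W i j = 0 := by
    have := congrFun (congrFun h i) j
    rw [diagonal_mul, mul_diagonal] at this
    rw [sub_mul, this, mul_comm, sub_self]
  rw [diagonal_mul, mul_diagonal, Function.comp_apply, Function.comp_apply]
  rcases mul_eq_zero.mp hij with hde | hW
  · rw [sub_eq_zero.mp hde, mul_comm]
  · rw [hW, zero_mul, mul_zero]

variable {n m : Type*} [Fintype n] [DecidableEq n] [Fintype m] [DecidableEq m]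

lemma rpowH_of_isHermitian {A : Matrix n n ℂ} (hA : A.IsHermitian) (r : ℝ) :
    A.rpowH r = (hA.eigenvectorUnitary : Matrix n n ℂ) *
      diagonal (fun i => ((hA.eigenvalues i ^ r : ℝ) : ℂ)) *
      star (hA.eigenvectorUnitary : Matrix n n ℂ) :=
  dif_pos hA

lemma rpowH_eq_cfc (A : Matrix n n ℂ) (r : ℝ) : A.rpowH r = cfc (fun x : ℝ => x ^ r) A := by
  by_cases hA : A.IsHermitian
  · rw [hA.cfc_eq, IsHermitian.cfc, rpowH_of_isHermitian hA, Unitary.conjStarAlgAut_apply]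
    rfl
  · rw [rpowH, dif_neg hA]
    exact (cfc_apply_of_not_predicate A hA).symm

lemma rpowH_isHermitian (A : Matrix n n ℂ) (r : ℝ) : (A.rpowH r).IsHermitian := by
  rw [rpowH_eq_cfc]
  exact cfc_predicate _ A

lemma rpowH_zero {A : Matrix n n ℂ} (hA : A.IsHermitian) : A.rpowH 0 = 1 := by
  simp only [rpowH_eq_cfc, Real.rpow_zero]
  exact cfc_const_one ℝ A

lemma rpowH_one {A : Matrix n n ℂ} (hA : A.IsHermitian) : A.rpowH 1 = A := by
  simp only [rpowH_eq_cfc, Real.rpow_one]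
  exact cfc_id' ℝ A hA

lemma rpowH_mul_rpowH {A : Matrix n n ℂ} (hA : A.PosDef) (a b : ℝ) :
    A.rpowH a * A.rpowH b = A.rpowH (a + b) := by
  rw [rpowH_eq_cfc, rpowH_eq_cfc, rpowH_eq_cfc, ← cfc_mul _ _ A
    (A.finite_real_spectrum.continuousOn _) (A.finite_real_spectrum.continuousOn _)]
  open scoped MatrixOrder in
  exact cfc_congr fun x hx => (Real.rpow_add (hA.isStrictlyPositive.spectrum_pos hx) a b).symm

lemma rpowH_smul_one (c r : ℝ) :
    ((c : ℂ) • (1 : Matrix n n ℂ)).rpowH r = ((c ^ r : ℝ) : ℂ) • (1 : Matrix n n ℂ) := by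
  have h (x : ℝ) : (x : ℂ) • (1 : Matrix n n ℂ) = algebraMap ℝ (Matrix n n ℂ) x :=
    (Algebra.algebraMap_eq_smul_one x).symm
  rw [rpowH_eq_cfc, h, h, cfc_algebraMap]

lemma rpowH_unitary_mul_diagonal_mul_star {U : Matrix n n ℂ} (hU : U ∈ unitary (Matrix n n ℂ))
    (d : n → ℝ) (r : ℝ) :
    (U * diagonal (fun i => (d i : ℂ)) * star U).rpowH r =
      U * diagonal (fun i => ((d i ^ r : ℝ) : ℂ)) * star U := by
  set A := U * diagonal (fun i => (d i : ℂ)) * star U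
  have hA : A.IsHermitian :=
    isHermitian_mul_mul_conjTranspose U (isHermitian_diagonal_of_self_adjoint _ (by ext; simp))
  set V : Matrix n n ℂ := (hA.eigenvectorUnitary : Matrix n n ℂ)
  have hV : V ∈ unitary (Matrix n n ℂ) := hA.eigenvectorUnitary.2
  set e := hA.eigenvalues
  have hspec : A = V * diagonal (fun i => (e i : ℂ)) * star V := hA.spectral_theorem
  -- `star V * U` intertwines the two diagonal forms of `A`, hence also their real powers.
  have hcomm : diagonal (fun i => (e i : ℂ)) * (star V * U) =
      (star V * U) * diagonal (fun i => (d i : ℂ)) := by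
    calc _ = star V * (V * diagonal (fun i => (e i : ℂ)) * star V) * U := by
          simp only [← mul_assoc, Unitary.star_mul_self_of_mem hV, one_mul]
      _ = star V * (U * diagonal (fun i => (d i : ℂ)) * star U) * U := by rw [← hspec]
      _ = _ := by simp only [mul_assoc, Unitary.star_mul_self_of_mem hU, mul_one]
  have hpow := diagonal_map_mul_eq_mul_diagonal_map hcomm (fun z => ((z.re ^ r : ℝ) : ℂ))
  simp only [Function.comp_def, Complex.ofReal_re] at hpow
  rw [rpowH_of_isHermitian hA]
  calc V * diagonal (fun i => ((e i ^ r : ℝ) : ℂ)) * star V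
      = V * (diagonal (fun i => ((e i ^ r : ℝ) : ℂ)) * (star V * U)) * star U * V * star V := by
        simp only [mul_assoc, Unitary.mul_star_self_of_mem hU, Unitary.mul_star_self_of_mem hV,
          mul_one]
    _ = U * diagonal (fun i => ((d i ^ r : ℝ) : ℂ)) * star U := by
        rw [hpow]
        simp only [← mul_assoc, Unitary.mul_star_self_of_mem hV, one_mul]
        simp only [mul_assoc, Unitary.mul_star_self_of_mem hV, mul_one]

lemma rpowH_kronecker {A : Matrix n n ℂ} {B : Matrix m m ℂ}
    (hA : A.PosSemidef) (hB : B.PosSemidef) (r : ℝ) :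
    (A ⊗ₖ B).rpowH r = A.rpowH r ⊗ₖ B.rpowH r := by
  set U : Matrix n n ℂ := (hA.1.eigenvectorUnitary : Matrix n n ℂ)
  set V : Matrix m m ℂ := (hB.1.eigenvectorUnitary : Matrix m m ℂ)
  have hUV : U ⊗ₖ V ∈ unitary (Matrix (n × m) (n × m) ℂ) :=
    kronecker_mem_unitary hA.1.eigenvectorUnitary.2 hB.1.eigenvectorUnitary.2
  have hAB : A ⊗ₖ B = (U ⊗ₖ V) *
      diagonal (fun p : n × m => ((hA.1.eigenvalues p.1 * hB.1.eigenvalues p.2 : ℝ) : ℂ)) *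
      star (U ⊗ₖ V) := by
    conv_lhs => rw [hA.1.spectral_theorem, hB.1.spectral_theorem]
    simp only [Unitary.conjStarAlgAut_apply, kronecker_conj, diagonal_kronecker_diagonal,
      Function.comp_apply, Complex.ofReal_mul]
    rfl
  rw [hAB, rpowH_unitary_mul_diagonal_mul_star hUV, rpowH_of_isHermitian hA.1,
    rpowH_of_isHermitian hB.1, kronecker_conj, diagonal_kronecker_diagonal]
  congr 3
  ext p
  rw [Real.mul_rpow (hA.eigenvalues_nonneg p.1) (hB.eigenvalues_nonneg p.2), Complex.ofReal_mul]

lemma PosSemidef.rpowH_mul_mul_rpowH {X : Matrix n n ℂ} (hX : X.PosSemidef) (A : Matrix n n ℂ)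
    (r : ℝ) : (A.rpowH r * X * A.rpowH r).PosSemidef := by
  simpa only [(rpowH_isHermitian A r).eq] using hX.mul_mul_conjTranspose_same (A.rpowH r)

lemma IsHermitian.exists_posSemidef_smul_one_sub {M : Matrix n n ℂ} (hM : M.IsHermitian) :
    ∃ c : ℝ, 0 ≤ c ∧ ((c : ℂ) • 1 - M).PosSemidef := by
  obtain ⟨c, hc⟩ := M.finite_real_spectrum.bddAbove
  refine ⟨max c 0, le_max_right c 0, ?_⟩
  open scoped MatrixOrder in
  have := le_algebraMap_of_spectrum_le (fun x hx => (hc hx).trans (le_max_left c 0)) hM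
  rwa [Algebra.algebraMap_eq_smul_one, ← Complex.coe_smul] at this

section PosDef

variable {σ : Matrix n n ℂ} (hσ : σ.PosDef)
include hσ

lemma rpowH_half_mul_rpowH_half : σ.rpowH (1/2) * σ.rpowH (1/2) = σ := by
  rw [rpowH_mul_rpowH hσ, add_halves, rpowH_one hσ.1]

lemma rpowH_neg_half_mul_mul_rpowH_neg_half : σ.rpowH (-(1/2)) * σ * σ.rpowH (-(1/2)) = 1 := by
  nth_rw 2 [← rpowH_one hσ.1]
  rw [rpowH_mul_rpowH hσ, rpowH_mul_rpowH hσ]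
  norm_num [rpowH_zero hσ.1]

lemma rpowH_half_conj_rpowH_neg_half_conj (X : Matrix n n ℂ) :
    σ.rpowH (1/2) * (σ.rpowH (-(1/2)) * X * σ.rpowH (-(1/2))) * σ.rpowH (1/2) = X := by
  have hcancel (a : ℝ) : σ.rpowH a * σ.rpowH (-a) = 1 := by
    rw [rpowH_mul_rpowH hσ, add_neg_cancel, rpowH_zero hσ.1]
  have hcancel' := hcancel (-(1/2))
  rw [neg_neg] at hcancel'
  simp only [← mul_assoc, hcancel, one_mul]
  rw [mul_assoc, hcancel', mul_one]

lemma exists_posSemidef_smul_sub {ρ : Matrix n n ℂ} (hρ : ρ.PosSemidef) :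
    ∃ c : ℝ, 0 ≤ c ∧ ((c : ℂ) • σ - ρ).PosSemidef := by
  obtain ⟨c, hc, hM⟩ := (hρ.rpowH_mul_mul_rpowH σ (-(1/2))).1.exists_posSemidef_smul_one_sub
  refine ⟨c, hc, ?_⟩
  simpa only [mul_sub, sub_mul, mul_smul_comm, smul_mul_assoc, mul_one,
    rpowH_half_mul_rpowH_half hσ, rpowH_half_conj_rpowH_neg_half_conj hσ]
    using hM.rpowH_mul_mul_rpowH σ (1/2)

lemma gmean_smul_self (β c : ℝ) : gmean β σ ((c : ℂ) • σ) = ((c ^ β : ℝ) : ℂ) • σ := by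
  rw [gmean, mul_smul_comm, smul_mul_assoc, rpowH_neg_half_mul_mul_rpowH_neg_half hσ,
    rpowH_smul_one, mul_smul_comm, smul_mul_assoc, mul_one, rpowH_half_mul_rpowH_half hσ]

end PosDef

lemma gmean_kronecker (β : ℝ) {σ₁ A₁ : Matrix n n ℂ} {σ₂ A₂ : Matrix m m ℂ}
    (hσ₁ : σ₁.PosSemidef) (hσ₂ : σ₂.PosSemidef) (hA₁ : A₁.PosSemidef) (hA₂ : A₂.PosSemidef) :
    gmean β (σ₁ ⊗ₖ σ₂) (A₁ ⊗ₖ A₂) = gmean β σ₁ A₁ ⊗ₖ gmean β σ₂ A₂ := by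
  simp only [gmean, rpowH_kronecker hσ₁ hσ₂, ← mul_kronecker_mul,
    rpowH_kronecker (hA₁.rpowH_mul_mul_rpowH σ₁ _) (hA₂.rpowH_mul_mul_rpowH σ₂ _)]

end Matrix

open scoped Pointwise in
lemma Real.sInf_le_sInf_mul_sInf {S T U : Set ℝ} (hU : BddBelow U) (hS : S.Nonempty)
    (hT : T.Nonempty) (hS₀ : ∀ s ∈ S, 0 ≤ s) (hT₀ : ∀ t ∈ T, 0 ≤ t) (hST : S * T ⊆ U) :
    sInf U ≤ sInf S * sInf T := by
  have hU_le (s : ℝ) (hs : s ∈ S) : sInf U ≤ sInf T * s := by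
    calc sInf U ≤ sInf (s • T) := by
          refine csInf_le_csInf hU hT.smul_set ?_
          rintro _ ⟨t, ht, rfl⟩
          exact hST (Set.mul_mem_mul hs ht)
      _ = sInf T * s := by rw [Real.sInf_smul_of_nonneg (hS₀ s hs), smul_eq_mul, mul_comm]
  calc sInf U ≤ sInf (sInf T • S) := by
        refine le_csInf hS.smul_set ?_
        rintro _ ⟨s, hs, rfl⟩
        exact hU_le s hs
    _ = sInf S * sInf T := by
        rw [Real.sInf_smul_of_nonneg (Real.sInf_nonneg hT₀), smul_eq_mul, mul_comm]

namespace QSharp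

open scoped Pointwise

variable {n m : Type*} [Fintype n] [DecidableEq n] [Fintype m] [DecidableEq m]

def feasibleTraces (α : ℝ) (ρ σ : Matrix n n ℂ) : Set ℝ :=
  { t : ℝ | ∃ A : Matrix n n ℂ, A.PosSemidef ∧
    (Matrix.gmean (1/α) σ A - ρ).PosSemidef ∧ t = A.trace.re }

lemma eq_sInf_feasibleTraces (α : ℝ) (ρ σ : Matrix n n ℂ) :
    QSharp α ρ σ = sInf (feasibleTraces α ρ σ) :=
  rfl

lemma nonneg_of_mem_feasibleTraces {α t : ℝ} {ρ σ : Matrix n n ℂ}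
    (ht : t ∈ feasibleTraces α ρ σ) : 0 ≤ t := by
  obtain ⟨A, hA, -, rfl⟩ := ht
  exact (Complex.nonneg_iff.mp hA.trace_nonneg).1

lemma feasibleTraces_nonempty {α : ℝ} (hα : α ≠ 0) {ρ σ : Matrix n n ℂ}
    (hρ : ρ.PosSemidef) (hσ : σ.PosDef) : (feasibleTraces α ρ σ).Nonempty := by
  obtain ⟨c, hc, hle⟩ := Matrix.exists_posSemidef_smul_sub hσ hρ
  refine ⟨_, ((c ^ α : ℝ) : ℂ) • σ, ?_, ?_, rfl⟩
  · simpa only [Complex.coe_smul] using hσ.posSemidef.smul (Real.rpow_nonneg hc α)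
  · rwa [Matrix.gmean_smul_self hσ, ← Real.rpow_mul hc, mul_one_div_cancel hα, Real.rpow_one]

lemma feasibleTraces_mul_subset {α : ℝ} {ρ₁ σ₁ : Matrix n n ℂ} {ρ₂ σ₂ : Matrix m m ℂ}
    (hρ₁ : ρ₁.PosSemidef) (hρ₂ : ρ₂.PosSemidef) (hσ₁ : σ₁.PosSemidef) (hσ₂ : σ₂.PosSemidef) :
    feasibleTraces α ρ₁ σ₁ * feasibleTraces α ρ₂ σ₂ ⊆
      feasibleTraces α (ρ₁ ⊗ₖ ρ₂) (σ₁ ⊗ₖ σ₂) := by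
  rintro _ ⟨_, ⟨A₁, hA₁, hG₁, rfl⟩, _, ⟨A₂, hA₂, hG₂, rfl⟩, rfl⟩
  set G₁ := Matrix.gmean (1/α) σ₁ A₁
  set G₂ := Matrix.gmean (1/α) σ₂ A₂
  have hsplit : G₁ ⊗ₖ G₂ - ρ₁ ⊗ₖ ρ₂ = (G₁ - ρ₁) ⊗ₖ G₂ + ρ₁ ⊗ₖ (G₂ - ρ₂) := by
    rw [sub_eq_iff_eq_add, add_assoc, ← Matrix.kronecker_add, sub_add_cancel,
      ← Matrix.add_kronecker, sub_add_cancel]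
  have hG₂' : G₂.PosSemidef := by simpa only [sub_add_cancel] using hG₂.add hρ₂
  refine ⟨A₁ ⊗ₖ A₂, hA₁.kronecker hA₂, ?_, ?_⟩
  · rw [Matrix.gmean_kronecker _ hσ₁ hσ₂ hA₁ hA₂, hsplit]
    exact (hG₁.kronecker hG₂').add (hρ₁.kronecker hG₂)
  · rw [Matrix.trace_kronecker, Complex.mul_re, (Complex.nonneg_iff.mp hA₁.trace_nonneg).2.symm]
    ring

end QSharp

/-- Q^#_α is submultiplicative under Kronecker (tensor) products,
i.e. D^#_α is subadditive under tensor products. -/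
theorem QSharp_kronecker_submultiplicative
    {n₁ n₂ : Type*} [Fintype n₁] [DecidableEq n₁] [Fintype n₂] [DecidableEq n₂]
    (α : ℝ) (hα : 1 < α)
    (ρ₁ : Matrix n₁ n₁ ℂ) (ρ₂ : Matrix n₂ n₂ ℂ)
    (σ₁ : Matrix n₁ n₁ ℂ) (σ₂ : Matrix n₂ n₂ ℂ)
    (hρ₁ : ρ₁.PosSemidef) (hρ₂ : ρ₂.PosSemidef)
    (hσ₁ : σ₁.PosDef) (hσ₂ : σ₂.PosDef) :
    QSharp α (ρ₁ ⊗ₖ ρ₂) (σ₁ ⊗ₖ σ₂) ≤ QSharp α ρ₁ σ₁ * QSharp α ρ₂ σ₂ := by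
  have hα₀ : α ≠ 0 := (one_pos.trans hα).ne'
  simp only [QSharp.eq_sInf_feasibleTraces]
  exact Real.sInf_le_sInf_mul_sInf ⟨0, fun _ => QSharp.nonneg_of_mem_feasibleTraces⟩
    (QSharp.feasibleTraces_nonempty hα₀ hρ₁ hσ₁) (QSharp.feasibleTraces_nonempty hα₀ hρ₂ hσ₂)
    (fun _ => QSharp.nonneg_of_mem_feasibleTraces) (fun _ => QSharp.nonneg_of_mem_feasibleTraces)
    (QSharp.feasibleTraces_mul_subset hρ₁ hρ₂ hσ₁.posSemidef hσ₂.posSemidef)
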